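/- arXiv:2306.04221 — 4 statements merged into one kernel-verified Lean document; each statement's English description precedes it below -/
import Mathlib

section
/- Let r ≥ 1, b ≥ 1 be integers, α a type with decidable equality, and h : α → ℕ a function. Define the SLASH hash f from finite subsets of α to (ZMod r)^b by f(S)_j := ∑_{x ∈ S, h(x) % b = j} (−1)^{h(x) / b} (sum in ZMod r, integer division in the exponent). Then for all finite sets S, T ⊆ α, RingDist(f(S), f(T)) ≤ |S Δ T|, where |S Δ T| is the cardinality of the symmetric difference of S and T. -/
/-- One-dimensional ring distance on `ZMod r`. -/
def ringDist (r : ℕ) (a c : ZMod r) : ℕ := min (a - c).val (c - a).val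

/-- `b`-dimensional ring distance on `(ZMod r)^b`. -/
def RingDist (r b : ℕ) (X Y : Fin b → ZMod r) : ℕ := ∑ j, ringDist r (X j) (Y j)

/-- The SLASH hash of a finite set. -/
def slash (r b : ℕ) {α : Type*} [DecidableEq α] (h : α → ℕ) (S : Finset α) :
    Fin b → ZMod r :=
  fun j => ∑ x ∈ S.filter (fun x => h x % b = (j : ℕ)), (-1 : ZMod r) ^ (h x / b)

lemma ringDist_le_natAbs {r : ℕ} (a c : ZMod r) (k : ℤ)
    (hk : (k : ZMod r) = a - c) : ringDist r a c ≤ k.natAbs := by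
  rcases le_or_gt 0 k with h0 | h0
  · have hk' : ((k.natAbs : ℕ) : ZMod r) = a - c := by
      rw [← hk, ← Int.cast_natCast, Int.natAbs_of_nonneg h0]
    calc ringDist r a c ≤ (a - c).val := min_le_left _ _
      _ = k.natAbs % r := by rw [← hk', ZMod.val_natCast]
      _ ≤ k.natAbs := Nat.mod_le _ _
  · have hk' : ((k.natAbs : ℕ) : ZMod r) = c - a := by
      have : ((-k : ℤ) : ZMod r) = c - a := by rw [Int.cast_neg, hk]; ring
      rw [← this, ← Int.cast_natCast, ← Int.natAbs_neg,
        Int.natAbs_of_nonneg (by omega : (0:ℤ) ≤ -k)]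
    calc ringDist r a c ≤ (c - a).val := min_le_right _ _
      _ = k.natAbs % r := by rw [← hk', ZMod.val_natCast]
      _ ≤ k.natAbs := Nat.mod_le _ _

/-- Locality sensitivity of SLASH: the ring distance between the hashes of two
finite sets is at most the cardinality of their symmetric difference. -/
theorem slash_locality (r b : ℕ) (hr : 1 ≤ r) (hb : 1 ≤ b)
    {α : Type*} [DecidableEq α] (h : α → ℕ) (S T : Finset α) :
    RingDist r b (slash r b h S) (slash r b h T) ≤ (symmDiff S T).card := by
  have key : ∀ j : Fin b, ringDist r (slash r b h S j) (slash r b h T j) ≤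
      ((symmDiff S T).filter (fun x => h x % b = (j : ℕ))).card := by
    intro j
    set p : α → Prop := fun x => h x % b = (j : ℕ) with hp
    set A := S.filter p with hA
    set B := T.filter p with hB
    set K : ℤ := ∑ x ∈ A \ B, (-1:ℤ)^(h x / b) - ∑ x ∈ B \ A, (-1:ℤ)^(h x / b)
      with hK
    have hcast : (K : ZMod r) = slash r b h S j - slash r b h T j := by
      rw [hK]
      push_cast
      rw [Finset.sum_sdiff_sub_sum_sdiff]
      rfl
    refine le_trans (ringDist_le_natAbs _ _ K hcast) ?_
    have habs : ∀ (F : Finset α), (∑ x ∈ F, (-1:ℤ)^(h x / b)).natAbs ≤ F.card := by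
      intro F
      have h1 : |∑ x ∈ F, (-1:ℤ)^(h x / b)| ≤ (F.card : ℤ) := by
        calc |∑ x ∈ F, (-1:ℤ)^(h x / b)| ≤ ∑ x ∈ F, |(-1:ℤ)^(h x / b)| :=
              Finset.abs_sum_le_sum_abs _ _
          _ = F.card := by simp [abs_pow]
      rw [Int.abs_eq_natAbs] at h1
      exact_mod_cast h1
    have hsplit : (symmDiff S T).filter p = (A \ B) ∪ (B \ A) := by
      ext x
      simp only [Finset.mem_filter, Finset.mem_union, Finset.mem_sdiff,
        Finset.mem_symmDiff, hA, hB]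
      tauto
    have hdisj : Disjoint (A \ B) (B \ A) :=
      disjoint_sdiff_sdiff
    calc K.natAbs ≤ (∑ x ∈ A \ B, (-1:ℤ)^(h x / b)).natAbs +
          (∑ x ∈ B \ A, (-1:ℤ)^(h x / b)).natAbs := Int.natAbs_sub_le _ _
      _ ≤ (A \ B).card + (B \ A).card := Nat.add_le_add (habs _) (habs _)
      _ = ((symmDiff S T).filter p).card := by
          rw [hsplit, Finset.card_union_of_disjoint hdisj]
    done
  calc RingDist r b (slash r b h S) (slash r b h T)
      ≤ ∑ j : Fin b, ((symmDiff S T).filter (fun x => h x % b = (j : ℕ))).card :=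
        Finset.sum_le_sum (fun j _ => key j)
    _ = (symmDiff S T).card := by
        rw [Finset.card_eq_sum_card_fiberwise
          (f := fun x => (⟨h x % b, Nat.mod_lt _ (by omega)⟩ : Fin b))
          (t := Finset.univ) (s := symmDiff S T) (fun x _ => Finset.mem_univ _)]
        refine Finset.sum_congr rfl fun j _ => ?_
        congr 1
        ext x
        simp [Fin.ext_iff]
end

section
/- Let r ≥ 1, b ≥ 1 be integers, α a type with decidable equality, h : α → ℕ, and f the SLASH hash defined by f(S)_j := ∑_{x ∈ S, h(x) % b = j} (−1)^{h(x) / b} in ZMod r. Then inserting a single element moves the hash by ring distance at most 1: for every finite set S ⊆ α and every x ∉ S, RingDist(f(S ∪ {x}), f(S)) ≤ 1. -/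
lemma ringDist_self (r : ℕ) (a : ZMod r) : ringDist r a a = 0 := by
  simp [ringDist]

/-- Inserting a single new element moves the SLASH hash by ring distance at
most `1`. -/
theorem slash_insert_dist_le_one (r b : ℕ) (hr : 1 ≤ r) (hb : 1 ≤ b)
    {α : Type*} [DecidableEq α] (h : α → ℕ) (S : Finset α) (x : α)
    (hx : x ∉ S) :
    RingDist r b (slash r b h (S ∪ {x})) (slash r b h S) ≤ 1 := by
  have hSx : S ∪ {x} = insert x S := by
    ext y; simp [or_comm]
  set j0 : Fin b := ⟨h x % b, Nat.mod_lt _ hb⟩ with hj0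
  have hkey : ∀ j : Fin b, j ≠ j0 →
      slash r b h (S ∪ {x}) j = slash r b h S j := by
    intro j hj
    have hne : ¬ (h x % b = (j : ℕ)) := by
      intro hc
      exact hj (Fin.ext (by simp [hj0, hc]))
    simp [slash, hSx, Finset.filter_insert, hne]
  have hterm : ∀ j : Fin b, ringDist r (slash r b h (S ∪ {x}) j) (slash r b h S j)
      ≤ if j = j0 then 1 else 0 := by
    intro j
    by_cases hj : j = j0
    · simp only [hj, if_pos rfl]
      have hmem : h x % b = (j0 : ℕ) := rfl
      have hx' : x ∉ S.filter (fun y => h y % b = (j0 : ℕ)) := by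
        simp [hx]
      have h1 : (1 : ZMod r).val ≤ 1 := by
        rw [ZMod.val_one_eq_one_mod]; exact Nat.mod_le 1 r
      have : slash r b h (S ∪ {x}) j0 = slash r b h S j0 + (-1 : ZMod r) ^ (h x / b) := by
        unfold slash
        rw [hSx, Finset.filter_insert, if_pos hmem, Finset.sum_insert hx', add_comm]
      rw [this]
      rcases Nat.even_or_odd (h x / b) with he | ho
      · rw [he.neg_one_pow]
        simp only [ringDist, add_sub_cancel_left]
        calc min (1 : ZMod r).val (slash r b h S j0 - (slash r b h S j0 + 1)).val
            ≤ (1 : ZMod r).val := min_le_left _ _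
          _ ≤ 1 := h1
      · rw [ho.neg_one_pow]
        simp only [ringDist, add_sub_cancel_left]
        calc min (-1 : ZMod r).val (slash r b h S j0 - (slash r b h S j0 + -1)).val
            ≤ (slash r b h S j0 - (slash r b h S j0 + -1)).val := min_le_right _ _
          _ = (1 : ZMod r).val := by ring_nf
          _ ≤ 1 := h1
    · rw [hkey j hj, ringDist_self]
      simp [hj]
  calc RingDist r b (slash r b h (S ∪ {x})) (slash r b h S)
      ≤ ∑ j : Fin b, if j = j0 then 1 else 0 := Finset.sum_le_sum (fun j _ => hterm j)
    _ = 1 := by simp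
end

section
/- Let r ≥ 1, b ≥ 1 be integers, α a type with decidable equality, h : α → ℕ, and f the SLASH hash defined by f(S)_j := ∑_{x ∈ S, h(x) % b = j} (−1)^{h(x) / b} in ZMod r. Then shared items do not affect the hash distance: for all finite sets S, T ⊆ α and every x ∈ S ∩ T, RingDist(f(S), f(T)) = RingDist(f(S \ {x}), f(T \ {x})). -/
/-- Items shared by two sets do not affect the distance between their SLASH
hashes: removing a common element from both sets preserves the ring distance. -/
theorem slash_dist_erase_shared (r b : ℕ) (hr : 1 ≤ r) (hb : 1 ≤ b)
    {α : Type*} [DecidableEq α] (h : α → ℕ) (S T : Finset α) (x : α)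
    (hx : x ∈ S ∩ T) :
    RingDist r b (slash r b h S) (slash r b h T) =
      RingDist r b (slash r b h (S \ {x})) (slash r b h (T \ {x})) := by
  rw [Finset.mem_inter] at hx
  have key : ∀ (U : Finset α), x ∈ U → ∀ j : Fin b,
      slash r b h U j =
        slash r b h (U \ {x}) j +
          (if h x % b = (j : ℕ) then (-1 : ZMod r) ^ (h x / b) else 0) := by
    intro U hxU j
    simp only [slash, Finset.sdiff_singleton_eq_erase, Finset.filter_erase]
    by_cases hc : h x % b = (j : ℕ)
    · rw [if_pos hc, Finset.sum_erase_add]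
      simp [hc, hxU]
    · rw [if_neg hc, add_zero, Finset.erase_eq_of_notMem]
      simp [hc]
  unfold RingDist
  apply Finset.sum_congr rfl
  intro j _
  unfold ringDist
  rw [key S hx.1 j, key T hx.2 j]
  ring_nf
end

section
/- Let r ≥ 1, b ≥ 1 be integers, α a type with decidable equality, h : α → ℕ, and f the SLASH hash into (ZMod r)^b. Then each non-shared item changes the hash distance by at most 1: for all finite sets S, T ⊆ α and every x ∉ S ∪ T, both RingDist(f(S ∪ {x}), f(T)) ≤ RingDist(f(S), f(T)) + 1 and RingDist(f(S), f(T)) ≤ RingDist(f(S ∪ {x}), f(T)) + 1. -/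
section ringDist

variable {r : ℕ}

theorem ringDist_eq_natAbs_valMinAbs (a c : ZMod r) :
    ringDist r a c = (a - c).valMinAbs.natAbs := by
  rw [ringDist, ← neg_sub a c]
  generalize a - c = u
  rcases eq_zero_or_neZero r with rfl | _
  · exact min_eq_left (Int.natAbs_neg (u : ℤ)).ge
  · rw [ZMod.valMinAbs_natAbs_eq_min, ZMod.neg_val]
    split_ifs with hu <;> simp [hu]

theorem ringDist_neg_zero (a : ZMod r) : ringDist r (-a) 0 = ringDist r a 0 := by
  simp [ringDist, min_comm]

theorem ringDist_add_le (a c e : ZMod r) :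
    ringDist r (a + e) c ≤ ringDist r a c + ringDist r e 0 := by
  simp only [ringDist_eq_natAbs_valMinAbs, sub_zero, add_sub_right_comm a e c]
  exact (ZMod.natAbs_valMinAbs_add_le _ _).trans (Int.natAbs_add_le _ _)

theorem ringDist_neg_one_pow_zero_le_one (k : ℕ) : ringDist r ((-1) ^ k) 0 ≤ 1 := by
  have h1 : ringDist r 1 0 ≤ 1 := by
    rw [ringDist, sub_zero, ZMod.val_one_eq_one_mod]
    exact (min_le_left _ _).trans (Nat.mod_le 1 r)
  rcases neg_one_pow_eq_or (ZMod r) k with h | h <;> rw [h]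
  · exact h1
  · rwa [ringDist_neg_zero]

end ringDist

section RingDist

variable {r b : ℕ}

theorem RingDist_add_le (X Y E : Fin b → ZMod r) :
    RingDist r b (X + E) Y ≤ RingDist r b X Y + RingDist r b E 0 := by
  rw [RingDist, RingDist, RingDist, ← Finset.sum_add_distrib]
  exact Finset.sum_le_sum fun j _ => ringDist_add_le _ _ _

theorem RingDist_neg_zero (E : Fin b → ZMod r) : RingDist r b (-E) 0 = RingDist r b E 0 :=
  Finset.sum_congr rfl fun j _ => ringDist_neg_zero (E j)

theorem RingDist_le_RingDist_add_add (X Y E : Fin b → ZMod r) :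
    RingDist r b X Y ≤ RingDist r b (X + E) Y + RingDist r b E 0 := by
  simpa only [add_neg_cancel_right, RingDist_neg_zero] using RingDist_add_le (X + E) Y (-E)

end RingDist

section slash

variable {r b : ℕ} {α : Type*} [DecidableEq α] (h : α → ℕ)

theorem slash_union {S T : Finset α} (hST : Disjoint S T) :
    slash r b h (S ∪ T) = slash r b h S + slash r b h T := by
  funext j
  simp only [slash, Pi.add_apply, Finset.filter_union]
  exact Finset.sum_union (Finset.disjoint_filter_filter hST)

theorem slash_singleton (x : α) (j : Fin b) :
    slash r b h {x} j = if h x % b = j then (-1) ^ (h x / b) else 0 := by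
  simp only [slash, Finset.filter_singleton]
  split_ifs <;> simp

theorem RingDist_slash_singleton_zero_le_one (x : α) :
    RingDist r b (slash r b h {x}) 0 ≤ 1 := by
  calc RingDist r b (slash r b h {x}) 0
      ≤ ∑ j : Fin b, if h x % b = j then 1 else 0 := by
        refine Finset.sum_le_sum fun j _ => ?_
        rw [slash_singleton]
        split_ifs
        · exact ringDist_neg_one_pow_zero_le_one _
        · simp [ringDist]
    _ ≤ 1 := by
        rw [Finset.sum_boole]
        exact Finset.card_le_one.2 fun i hi j hj => Fin.ext (by simp_all)

end slash

theorem slash_dist_insert_nonshared_general (r b : ℕ)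
    {α : Type*} [DecidableEq α] (h : α → ℕ) (S T : Finset α) (x : α)
    (hx : x ∉ S ∪ T) :
    RingDist r b (slash r b h (S ∪ {x})) (slash r b h T) ≤
        RingDist r b (slash r b h S) (slash r b h T) + 1 ∧
    RingDist r b (slash r b h S) (slash r b h T) ≤
        RingDist r b (slash r b h (S ∪ {x})) (slash r b h T) + 1 := by
  have hxS : Disjoint S {x} :=
    Finset.disjoint_singleton_right.2 fun hxS => hx (Finset.mem_union_left T hxS)
  have hstep : RingDist r b (slash r b h {x}) 0 ≤ 1 := RingDist_slash_singleton_zero_le_one h x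
  rw [slash_union h hxS]
  exact ⟨(RingDist_add_le _ _ _).trans (Nat.add_le_add_left hstep _),
    (RingDist_le_RingDist_add_add _ _ _).trans (Nat.add_le_add_left hstep _)⟩

/-- A non-shared item changes the distance between SLASH hashes by at most `1`
(in either direction). -/
theorem slash_dist_insert_nonshared (r b : ℕ) (hr : 1 ≤ r) (hb : 1 ≤ b)
    {α : Type*} [DecidableEq α] (h : α → ℕ) (S T : Finset α) (x : α)
    (hx : x ∉ S ∪ T) :
    RingDist r b (slash r b h (S ∪ {x})) (slash r b h T) ≤
        RingDist r b (slash r b h S) (slash r b h T) + 1 ∧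
    RingDist r b (slash r b h S) (slash r b h T) ≤
        RingDist r b (slash r b h (S ∪ {x})) (slash r b h T) + 1 :=
  slash_dist_insert_nonshared_general r b h S T x hx
end
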